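/- For every real number d ≥ 1, the function ⦀·⦀_d is a norm on the complex vector space V: ⦀v⦀_d ≥ 0 for all v, ⦀v⦀_d = 0 if and only if v = 0, ⦀cv⦀_d = |c|·⦀v⦀_d for every c ∈ ℂ and v ∈ V, and ⦀u+v⦀_d ≤ ⦀u⦀_d + ⦀v⦀_d for all u, v ∈ V. -/

import Mathlib

/-!
For `v ∈ V` the curve `γ_v(t) = e^{it} v + e^{-it} v*` lies in `V_ℝ` and equals
`cos t • γ_v(0) + sin t • γ_v(π/2)`, so `t ↦ ‖γ_v(t)‖` is a convex function of `(cos t, sin t)`,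
hence continuous, and `⦀v⦀_d` is a positive multiple of its `L^d` norm over one period.
Since `γ` is additive in `v`, subadditivity is Minkowski's inequality; since
`γ_{cv}(t) = |c| γ_v(t + arg c)`, homogeneity is the translation invariance of the integral over a
period; and if `⦀v⦀_d = 0`, continuity forces `γ_v(0) = v + v*` and `γ_v(π/2) = i(v - v*)` to
vanish, so `v = 0`.
-/

open MeasureTheory

/-- Given a function `Nr` (a norm on the real points of `V`) and a conjugate-linear
involution `invol` on `V`, this is the extended quantity
`⦀v⦀_d = ((1/(2π b_d)) ∫_0^{2π} ‖e^{it}v + e^{-it}v*‖^d dt)^(1/d)` with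
`b_d = Γ(d+1)/Γ(d/2+1)^2`, so `1/(2π b_d) = Γ(d/2+1)^2/(2π Γ(d+1))`. -/
noncomputable def circNorm {V : Type} [AddCommGroup V] [Module ℂ V]
    (Nr : V → ℝ) (invol : V → V) (d : ℝ) (v : V) : ℝ :=
  ((Real.Gamma (d / 2 + 1) ^ 2 / (2 * Real.pi * Real.Gamma (d + 1))) *
    ∫ t in (0:ℝ)..(2 * Real.pi),
      Nr (Complex.exp (↑t * Complex.I) • v +
        Complex.exp (-(↑t * Complex.I)) • invol v) ^ d) ^ (1 / d) 

open Set Function Complex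
open scoped Real

section IntervalIntegral

theorem integral_rpow_norm_add_le {α E : Type*} [MeasurableSpace α] {μ : Measure α}
    [NormedAddCommGroup E] {f g : α → E} {p : ℝ} (hp : 1 ≤ p)
    (hf : MemLp f (.ofReal p) μ) (hg : MemLp g (.ofReal p) μ) :
    (∫ x, ‖f x + g x‖ ^ p ∂μ) ^ (1 / p) ≤
      (∫ x, ‖f x‖ ^ p ∂μ) ^ (1 / p) + (∫ x, ‖g x‖ ^ p ∂μ) ^ (1 / p) := by
  have hp₀ : ENNReal.ofReal p ≠ 0 := (ENNReal.ofReal_pos.2 (by linarith)).ne'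
  have key := eLpNorm_add_le hf.1 hg.1 (ENNReal.one_le_ofReal.2 hp)
  rw [(hf.add hg).eLpNorm_eq_integral_rpow_norm hp₀ ENNReal.ofReal_ne_top,
    hf.eLpNorm_eq_integral_rpow_norm hp₀ ENNReal.ofReal_ne_top,
    hg.eLpNorm_eq_integral_rpow_norm hp₀ ENNReal.ofReal_ne_top,
    ← ENNReal.ofReal_add (by positivity) (by positivity),
    ENNReal.ofReal_le_ofReal_iff (by positivity), ENNReal.toReal_ofReal (by linarith)] at key
  simpa only [one_div, Pi.add_apply] using key

variable {f g : ℝ → ℝ} {a b : ℝ}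

theorem intervalIntegral_rpow_add_le {p : ℝ} (hab : a ≤ b) (hp : 1 ≤ p)
    (hf : Continuous f) (hg : Continuous g) (hf₀ : ∀ t, 0 ≤ f t) (hg₀ : ∀ t, 0 ≤ g t) :
    (∫ t in a..b, (f t + g t) ^ p) ^ (1 / p) ≤
      (∫ t in a..b, f t ^ p) ^ (1 / p) + (∫ t in a..b, g t ^ p) ^ (1 / p) := by
  have memLp (h : ℝ → ℝ) (hh : Continuous h) :
      MemLp h (.ofReal p) (volume.restrict (Ioc a b)) :=
    (integrable_norm_rpow_iff hh.aestronglyMeasurable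
      (ENNReal.ofReal_pos.2 (by linarith)).ne' ENNReal.ofReal_ne_top).1 <| by
        rw [ENNReal.toReal_ofReal (by linarith)]
        exact (hh.norm.rpow_const fun _ => Or.inr (by linarith)).integrableOn_Ioc
  have key := integral_rpow_norm_add_le hp (memLp f hf) (memLp g hg)
  simp only [Real.norm_of_nonneg (hf₀ _), Real.norm_of_nonneg (hg₀ _),
    Real.norm_of_nonneg (add_nonneg (hf₀ _) (hg₀ _))] at key
  simpa only [intervalIntegral.integral_of_le hab] using key

theorem eqOn_zero_of_intervalIntegral_eq_zero (hab : a < b) (hf : ContinuousOn f (Icc a b))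
    (hf₀ : ∀ x ∈ Icc a b, 0 ≤ f x) (h : ∫ x in a..b, f x = 0) : EqOn f 0 (Icc a b) := by
  intro x hx
  by_contra hne
  exact (intervalIntegral.integral_pos hab hf (fun y hy => hf₀ y (Ioc_subset_Icc_self hy))
    ⟨x, hx, (hf₀ x hx).lt_of_ne (Ne.symm hne)⟩).ne' h

theorem Function.Periodic.intervalIntegral_comp_add_right {T : ℝ} (hf : Periodic f T) (s : ℝ) :
    ∫ t in a..a + T, f (t + s) = ∫ t in a..a + T, f t := by
  rw [intervalIntegral.integral_comp_add_right, add_right_comm]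
  exact hf.intervalIntegral_add_eq (a + s) a

end IntervalIntegral

variable {V : Type*} [AddCommGroup V] [Module ℂ V]

structure IsNormOnFixedPoints (σ : V → V) (N : V → ℝ) : Prop where
  nonneg : ∀ v, σ v = v → 0 ≤ N v
  eq_zero_iff : ∀ v, σ v = v → (N v = 0 ↔ v = 0)
  ofReal_smul : ∀ (r : ℝ) v, σ v = v → N ((r : ℂ) • v) = |r| * N v
  add_le : ∀ u v, σ u = u → σ v = v → N (u + v) ≤ N u + N v

noncomputable def circleCurve (σ : V → V) (v : V) (t : ℝ) : V :=
  exp (t * I) • v + exp (-(t * I)) • σ v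

noncomputable def curveLpNorm (N : V → ℝ) (σ : V → V) (d : ℝ) (v : V) : ℝ :=
  (∫ t in 0..2 * π, N (circleCurve σ v t) ^ d) ^ (1 / d)

variable {σ : V →ₗ⋆[ℂ] V} {N : V → ℝ}

section FixedPoints

lemma map_ofReal_smul_of_map_eq {v : V} (hv : σ v = v) (r : ℝ) :
    σ ((r : ℂ) • v) = (r : ℂ) • v := by
  rw [map_smulₛₗ, conj_ofReal, hv]

lemma IsNormOnFixedPoints.convexOn_comp_ofReal_smul_add (hN : IsNormOnFixedPoints σ N) {a b : V}
    (ha : σ a = a) (hb : σ b = b) :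
    ConvexOn ℝ univ fun p : ℝ × ℝ => N ((p.1 : ℂ) • a + (p.2 : ℂ) • b) := by
  refine ⟨convex_univ, fun p _ q _ s t hs ht _ => ?_⟩
  have fixed (x y : ℝ) : σ ((x : ℂ) • a + (y : ℂ) • b) = (x : ℂ) • a + (y : ℂ) • b := by
    rw [map_add, map_ofReal_smul_of_map_eq ha, map_ofReal_smul_of_map_eq hb]
  set P := (p.1 : ℂ) • a + (p.2 : ℂ) • b
  set Q := (q.1 : ℂ) • a + (q.2 : ℂ) • b
  have hcomb : (((s • p + t • q).1 : ℝ) : ℂ) • a + (((s • p + t • q).2 : ℝ) : ℂ) • b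
      = (s : ℂ) • P + (t : ℂ) • Q := by
    simp only [Prod.fst_add, Prod.snd_add, Prod.smul_fst, Prod.smul_snd, smul_eq_mul, P, Q]
    push_cast
    module
  calc N ((((s • p + t • q).1 : ℝ) : ℂ) • a + (((s • p + t • q).2 : ℝ) : ℂ) • b)
      = N ((s : ℂ) • P + (t : ℂ) • Q) := by rw [hcomb]
    _ ≤ N ((s : ℂ) • P) + N ((t : ℂ) • Q) :=
      hN.add_le _ _ (map_ofReal_smul_of_map_eq (fixed _ _) s)
        (map_ofReal_smul_of_map_eq (fixed _ _) t)
    _ = s • N P + t • N Q := by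
      rw [hN.ofReal_smul s P (fixed _ _), hN.ofReal_smul t Q (fixed _ _), abs_of_nonneg hs,
        abs_of_nonneg ht, smul_eq_mul, smul_eq_mul]

lemma IsNormOnFixedPoints.continuous_comp_cos_smul_add_sin_smul (hN : IsNormOnFixedPoints σ N)
    {a b : V} (ha : σ a = a) (hb : σ b = b) :
    Continuous fun t : ℝ => N ((Real.cos t : ℂ) • a + (Real.sin t : ℂ) • b) := by
  have h := (hN.convexOn_comp_ofReal_smul_add ha hb).continuousOn_interior
  rw [interior_univ, continuousOn_univ] at h
  exact h.comp (by fun_prop : Continuous fun t => (Real.cos t, Real.sin t))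

end FixedPoints

section CircleCurve

lemma circleCurve_add (u v : V) (t : ℝ) :
    circleCurve σ (u + v) t = circleCurve σ u t + circleCurve σ v t := by
  simp only [circleCurve, map_add, smul_add]
  abel

lemma circleCurve_smul (c : ℂ) (v : V) (t : ℝ) :
    circleCurve σ (c • v) t = (‖c‖ : ℂ) • circleCurve σ v (t + c.arg) := by
  have hc : c = ‖c‖ * exp (c.arg * I) := (norm_mul_exp_arg_mul_I c).symm
  have h₁ : exp (t * I) * c = ‖c‖ * exp (↑(t + c.arg) * I) := by
    conv_lhs => rw [hc]
    rw [ofReal_add, add_mul, exp_add]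
    ring
  have h₂ : exp (-(t * I)) * (starRingEnd ℂ) c = ‖c‖ * exp (-(↑(t + c.arg) * I)) := by
    conv_lhs => rw [hc]
    rw [map_mul, conj_ofReal, ← exp_conj, map_mul, conj_ofReal, conj_I, mul_neg, ofReal_add,
      add_mul, neg_add, exp_add]
    ring
  rw [circleCurve, circleCurve, map_smulₛₗ, smul_smul, smul_smul, h₁, h₂, ← smul_smul,
    ← smul_smul, ← smul_add]

lemma map_circleCurve (hσ : Involutive σ) (v : V) (t : ℝ) :
    σ (circleCurve σ v t) = circleCurve σ v t := by
  rw [circleCurve, map_add, map_smulₛₗ, map_smulₛₗ, hσ v, ← exp_conj, ← exp_conj, map_neg,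
    map_mul, conj_ofReal, conj_I, mul_neg, neg_neg, add_comm]

lemma periodic_circleCurve (v : V) : Periodic (circleCurve σ v) (2 * π) := by
  intro t
  simp only [circleCurve, ofReal_add, ofReal_mul, add_mul, neg_add, exp_add, exp_neg (2 * π * I),
    ofReal_ofNat, exp_two_pi_mul_I, inv_one, mul_one]

lemma circleCurve_zero_right (v : V) : circleCurve σ v 0 = v + σ v := by
  simp [circleCurve]

lemma circleCurve_pi_div_two (v : V) : circleCurve σ v (π / 2) = I • v - I • σ v := by
  rw [circleCurve, ofReal_div, ofReal_ofNat, exp_pi_div_two_mul_I, ← neg_mul, ← neg_div,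
    exp_neg_pi_div_two_mul_I]
  module

lemma circleCurve_eq_cos_smul_add_sin_smul (v : V) (t : ℝ) :
    circleCurve σ v t =
      (Real.cos t : ℂ) • circleCurve σ v 0 + (Real.sin t : ℂ) • circleCurve σ v (π / 2) := by
  have hneg : exp (-(t * I)) = cos t - sin t * I := by
    rw [← neg_mul, exp_mul_I, cos_neg, sin_neg, neg_mul, sub_eq_add_neg]
  rw [circleCurve_zero_right, circleCurve_pi_div_two, circleCurve, exp_mul_I, hneg, ofReal_cos,
    ofReal_sin]
  module

lemma eq_zero_of_circleCurve_eq_zero {v : V} (h₀ : circleCurve σ v 0 = 0)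
    (h₁ : circleCurve σ v (π / 2) = 0) : v = 0 := by
  have h : ((2 : ℂ) * I) • v = I • circleCurve σ v 0 + circleCurve σ v (π / 2) := by
    rw [circleCurve_zero_right, circleCurve_pi_div_two]
    module
  rw [h₀, h₁, smul_zero, add_zero] at h
  simpa using h

end CircleCurve

section CurveLpNorm

lemma IsNormOnFixedPoints.continuous_comp_circleCurve (hσ : Involutive σ)
    (hN : IsNormOnFixedPoints σ N) (v : V) : Continuous fun t => N (circleCurve σ v t) :=
  (hN.continuous_comp_cos_smul_add_sin_smul (map_circleCurve hσ v 0)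
    (map_circleCurve hσ v _)).congr fun t => by rw [← circleCurve_eq_cos_smul_add_sin_smul]

lemma IsNormOnFixedPoints.comp_circleCurve_nonneg (hσ : Involutive σ)
    (hN : IsNormOnFixedPoints σ N) (v : V) (t : ℝ) : 0 ≤ N (circleCurve σ v t) :=
  hN.nonneg _ (map_circleCurve hσ v t)

lemma IsNormOnFixedPoints.integral_rpow_nonneg (hσ : Involutive σ)
    (hN : IsNormOnFixedPoints σ N) (d : ℝ) (v : V) :
    0 ≤ ∫ t in 0..2 * π, N (circleCurve σ v t) ^ d :=
  intervalIntegral.integral_nonneg (by positivity) fun t _ =>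
    Real.rpow_nonneg (hN.comp_circleCurve_nonneg hσ v t) d

lemma curveLpNorm_nonneg (hσ : Involutive σ) (hN : IsNormOnFixedPoints σ N) (d : ℝ) (v : V) :
    0 ≤ curveLpNorm N σ d v :=
  Real.rpow_nonneg (hN.integral_rpow_nonneg hσ d v) _

lemma curveLpNorm_smul (hσ : Involutive σ) (hN : IsNormOnFixedPoints σ N) {d : ℝ} (hd : 0 < d)
    (c : ℂ) (v : V) : curveLpNorm N σ d (c • v) = ‖c‖ * curveLpNorm N σ d v := by
  have hshift : ∀ t, N (circleCurve σ (c • v) t) ^ d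
      = ‖c‖ ^ d * N (circleCurve σ v (t + c.arg)) ^ d := fun t => by
    rw [circleCurve_smul, hN.ofReal_smul _ _ (map_circleCurve hσ v _), abs_norm,
      Real.mul_rpow (norm_nonneg c) (hN.comp_circleCurve_nonneg hσ v _)]
  have hper : Periodic (fun t => N (circleCurve σ v t) ^ d) (2 * π) :=
    (periodic_circleCurve v).comp fun x => N x ^ d
  have hint := hper.intervalIntegral_comp_add_right (a := 0) c.arg
  rw [zero_add] at hint
  rw [curveLpNorm, curveLpNorm, funext hshift, intervalIntegral.integral_const_mul, hint,
    Real.mul_rpow (by positivity) (hN.integral_rpow_nonneg hσ d v), one_div,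
    Real.rpow_rpow_inv (norm_nonneg c) hd.ne']

lemma curveLpNorm_add_le (hσ : Involutive σ) (hN : IsNormOnFixedPoints σ N) {d : ℝ}
    (hd : 1 ≤ d) (u v : V) :
    curveLpNorm N σ d (u + v) ≤ curveLpNorm N σ d u + curveLpNorm N σ d v := by
  have hd₀ : 0 ≤ d := by linarith
  have hcont := hN.continuous_comp_circleCurve hσ
  have hnonneg := hN.comp_circleCurve_nonneg hσ
  have hpointwise (t : ℝ) :
      N (circleCurve σ (u + v) t) ^ d ≤ (N (circleCurve σ u t) + N (circleCurve σ v t)) ^ d := by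
    refine Real.rpow_le_rpow (hnonneg (u + v) t) ?_ hd₀
    rw [circleCurve_add]
    exact hN.add_le _ _ (map_circleCurve hσ u t) (map_circleCurve hσ v t)
  calc curveLpNorm N σ d (u + v)
      ≤ (∫ t in 0..2 * π, (N (circleCurve σ u t) + N (circleCurve σ v t)) ^ d) ^ (1 / d) := by
        refine Real.rpow_le_rpow (hN.integral_rpow_nonneg hσ d _)
          (intervalIntegral.integral_mono_on (by positivity) ?_ ?_ fun t _ => hpointwise t)
          (by positivity)
        · exact ((hcont _).rpow_const fun _ => Or.inr hd₀).intervalIntegrable _ _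
        · exact (((hcont u).add (hcont v)).rpow_const fun _ => Or.inr hd₀).intervalIntegrable _ _
    _ ≤ curveLpNorm N σ d u + curveLpNorm N σ d v :=
        intervalIntegral_rpow_add_le (by positivity) hd (hcont u) (hcont v) (hnonneg u) (hnonneg v)

lemma curveLpNorm_eq_zero_iff (hσ : Involutive σ) (hN : IsNormOnFixedPoints σ N) {d : ℝ}
    (hd : 0 < d) (v : V) : curveLpNorm N σ d v = 0 ↔ v = 0 := by
  refine ⟨fun h => ?_, fun h => ?_⟩
  · have hnonneg := hN.comp_circleCurve_nonneg hσ v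
    have hint : ∫ t in 0..2 * π, N (circleCurve σ v t) ^ d = 0 :=
      (Real.rpow_eq_zero (hN.integral_rpow_nonneg hσ d v) (by positivity)).1 h
    have hvanish := eqOn_zero_of_intervalIntegral_eq_zero (by positivity)
      ((hN.continuous_comp_circleCurve hσ v).rpow_const fun _ => Or.inr hd.le).continuousOn
      (fun t _ => Real.rpow_nonneg (hnonneg t) d) hint
    have hcurve (t : ℝ) (ht : t ∈ Icc 0 (2 * π)) : circleCurve σ v t = 0 :=
      (hN.eq_zero_iff _ (map_circleCurve hσ v t)).1
        ((Real.rpow_eq_zero (hnonneg t) hd.ne').1 (hvanish ht))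
    exact eq_zero_of_circleCurve_eq_zero (hcurve 0 ⟨le_rfl, by positivity⟩)
      (hcurve (π / 2) ⟨by positivity, by linarith [Real.pi_pos]⟩)
  · rw [h, ← zero_smul ℂ (0 : V), curveLpNorm_smul hσ hN hd, norm_zero, zero_mul]

end CurveLpNorm

/-- For every real `d ≥ 1`, the function `⦀·⦀_d` is a norm on the complex
vector space `V`: nonnegative, vanishing exactly at `0`, absolutely homogeneous over `ℂ`,
and subadditive. -/
theorem circNorm_is_norm {V : Type} [AddCommGroup V] [Module ℂ V]
    (invol : V → V)
    (hadd : ∀ u v : V, invol (u + v) = invol u + invol v)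
    (hsmul : ∀ (c : ℂ) (v : V), invol (c • v) = (starRingEnd ℂ c) • invol v)
    (hinvol : ∀ v : V, invol (invol v) = v)
    (Nr : V → ℝ)
    (hNnonneg : ∀ v : V, invol v = v → 0 ≤ Nr v)
    (hNdef : ∀ v : V, invol v = v → (Nr v = 0 ↔ v = 0))
    (hNhom : ∀ (r : ℝ) (v : V), invol v = v → Nr ((r : ℂ) • v) = |r| * Nr v)
    (hNadd : ∀ u v : V, invol u = u → invol v = v → Nr (u + v) ≤ Nr u + Nr v)
    (d : ℝ) (hd : 1 ≤ d) :
    (∀ v : V, 0 ≤ circNorm Nr invol d v) ∧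
    (∀ v : V, circNorm Nr invol d v = 0 ↔ v = 0) ∧
    (∀ (c : ℂ) (v : V), circNorm Nr invol d (c • v) = ‖c‖ * circNorm Nr invol d v) ∧
    (∀ u v : V, circNorm Nr invol d (u + v) ≤ circNorm Nr invol d u + circNorm Nr invol d v) := by
  let σ : V →ₗ⋆[ℂ] V := ⟨⟨invol, hadd⟩, hsmul⟩
  have hσ : Involutive σ := hinvol
  have hN : IsNormOnFixedPoints σ Nr := ⟨hNnonneg, hNdef, hNhom, hNadd⟩
  have hd₀ : 0 < d := by linarith
  set κ := (Real.Gamma (d / 2 + 1) ^ 2 / (2 * π * Real.Gamma (d + 1))) ^ (1 / d)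
  have hκ : 0 < κ := by positivity
  have hcirc (v : V) : circNorm Nr invol d v = κ * curveLpNorm Nr σ d v :=
    Real.mul_rpow (by positivity) (hN.integral_rpow_nonneg hσ d v)
  refine ⟨fun v => ?_, fun v => ?_, fun c v => ?_, fun u v => ?_⟩
  · exact hcirc v ▸ mul_nonneg hκ.le (curveLpNorm_nonneg hσ hN d v)
  · rw [hcirc, mul_eq_zero_iff_left hκ.ne', curveLpNorm_eq_zero_iff hσ hN hd₀]
  · rw [hcirc, hcirc, curveLpNorm_smul hσ hN hd₀, mul_left_comm]
  · rw [hcirc, hcirc, hcirc, ← mul_add]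
    exact mul_le_mul_of_nonneg_left (curveLpNorm_add_le hσ hN hd u v) hκ.le
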